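/- For s ∈ (0,1), the function u₁(x₁,x₂) := (√(x₁²+x₂²)+x₁)^s · (s√(x₁²+x₂²) − x₁) satisfies ∂₁(x₂^{1−2s}∂₁u₁) + ∂₂(x₂^{1−2s}∂₂u₁) = 0 on the open upper half-plane {x₂ > 0}. -/

import Mathlib

open Real

/-!
With `r = √(x₁² + x₂²)` and `w = r + x₁`, one has `∂₁w = w / r` and `∂₂w = x₂ / r`, so the
gradient of `u₁` is `((s² - 1) wˢ, s(s + 1) x₂ wˢ⁻¹)`. Differentiating once more and dividing by
`s(s + 1) x₂^{1-2s} wˢ⁻² / r`, the weighted divergence becomes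
`(s - 1)(w² - 2rw + x₂²) = (s - 1)(x₁² + x₂² - r²) = 0`.
-/

/-- The `(1+s)`-homogeneous solution `u₁ = w_{0,s}(x₁,x₂)(s r - x₁)` of the
two-dimensional mixed Dirichlet–Neumann problem. -/
noncomputable def u1 (s x₁ x₂ : ℝ) : ℝ :=
  (Real.sqrt (x₁ ^ 2 + x₂ ^ 2) + x₁) ^ s * (s * Real.sqrt (x₁ ^ 2 + x₂ ^ 2) - x₁)

lemma sqrt_sq_add_sq_add_pos (a : ℝ) {b : ℝ} (hb : b ≠ 0) : 0 < √(a ^ 2 + b ^ 2) + a := by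
  have : |a| < √(a ^ 2 + b ^ 2) :=
    (Real.lt_sqrt (abs_nonneg a)).mpr (by rw [sq_abs]; exact lt_add_of_pos_right _ (by positivity))
  linarith [neg_abs_le a]

lemma hasDerivAt_sqrt_sq_add_sq_left (b : ℝ) {t : ℝ} (h : t ^ 2 + b ^ 2 ≠ 0) :
    HasDerivAt (fun a => √(a ^ 2 + b ^ 2)) (t / √(t ^ 2 + b ^ 2)) t := by
  refine (((hasDerivAt_pow 2 t).add_const (b ^ 2)).sqrt h).congr_deriv ?_
  simp only [Nat.cast_ofNat, Nat.add_one_sub_one, pow_one]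
  ring

lemma hasDerivAt_sqrt_sq_add_sq_right (a : ℝ) {t : ℝ} (h : a ^ 2 + t ^ 2 ≠ 0) :
    HasDerivAt (fun b => √(a ^ 2 + b ^ 2)) (t / √(a ^ 2 + t ^ 2)) t := by
  refine (((hasDerivAt_pow 2 t).const_add (a ^ 2)).sqrt h).congr_deriv ?_
  simp only [Nat.cast_ofNat, Nat.add_one_sub_one, pow_one]
  ring

lemma hasDerivAt_rpow_sqrt_sq_add_sq_add_left (p : ℝ) {b : ℝ} (hb : b ≠ 0) (t : ℝ) :
    HasDerivAt (fun a => (√(a ^ 2 + b ^ 2) + a) ^ p)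
      (p * (√(t ^ 2 + b ^ 2) + t) ^ p / √(t ^ 2 + b ^ 2)) t := by
  have hq : 0 < t ^ 2 + b ^ 2 := by positivity
  have hr : 0 < √(t ^ 2 + b ^ 2) := Real.sqrt_pos.mpr hq
  have hw := sqrt_sq_add_sq_add_pos t hb
  refine (((hasDerivAt_sqrt_sq_add_sq_left b hq.ne').add (hasDerivAt_id' t)).rpow_const
    (Or.inl hw.ne')).congr_deriv ?_
  rw [Pi.add_apply, Real.rpow_sub_one hw.ne']
  field_simp
  ring

lemma hasDerivAt_rpow_sqrt_sq_add_sq_add_right (p a : ℝ) {t : ℝ} (ht : t ≠ 0) :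
    HasDerivAt (fun b => (√(a ^ 2 + b ^ 2) + a) ^ p)
      (p * t * (√(a ^ 2 + t ^ 2) + a) ^ (p - 1) / √(a ^ 2 + t ^ 2)) t := by
  have hq : 0 < a ^ 2 + t ^ 2 := by positivity
  refine (((hasDerivAt_sqrt_sq_add_sq_right a hq.ne').add_const a).rpow_const
    (Or.inl (sqrt_sq_add_sq_add_pos a ht).ne')).congr_deriv ?_
  ring

lemma hasDerivAt_u1_fst (s : ℝ) {x₂ : ℝ} (hx₂ : x₂ ≠ 0) (t : ℝ) :
    HasDerivAt (fun a => u1 s a x₂) ((s ^ 2 - 1) * (√(t ^ 2 + x₂ ^ 2) + t) ^ s) t := by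
  have hq : 0 < t ^ 2 + x₂ ^ 2 := by positivity
  have hr : 0 < √(t ^ 2 + x₂ ^ 2) := Real.sqrt_pos.mpr hq
  refine ((hasDerivAt_rpow_sqrt_sq_add_sq_add_left s hx₂ t).mul
    (((hasDerivAt_sqrt_sq_add_sq_left x₂ hq.ne').const_mul s).sub (hasDerivAt_id' t))).congr_deriv ?_
  simp only [Pi.sub_apply]
  field_simp
  ring

lemma hasDerivAt_u1_snd (s x₁ : ℝ) {t : ℝ} (ht : t ≠ 0) :
    HasDerivAt (fun b => u1 s x₁ b)
      (s * (s + 1) * t * (√(x₁ ^ 2 + t ^ 2) + x₁) ^ (s - 1)) t := by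
  have hq : 0 < x₁ ^ 2 + t ^ 2 := by positivity
  have hr : 0 < √(x₁ ^ 2 + t ^ 2) := Real.sqrt_pos.mpr hq
  have hw := sqrt_sq_add_sq_add_pos x₁ ht
  refine ((hasDerivAt_rpow_sqrt_sq_add_sq_add_right s x₁ ht).mul
    (((hasDerivAt_sqrt_sq_add_sq_right x₁ hq.ne').const_mul s).sub_const x₁)).congr_deriv ?_
  rw [Real.rpow_sub_one hw.ne']
  field_simp
  ring

lemma hasDerivAt_weighted_deriv_u1_fst (s x₁ : ℝ) {x₂ : ℝ} (hx₂ : x₂ ≠ 0) :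
    HasDerivAt (fun t => x₂ ^ (1 - 2 * s) * deriv (fun a => u1 s a x₂) t)
      (x₂ ^ (1 - 2 * s) * ((s ^ 2 - 1) *
        (s * (√(x₁ ^ 2 + x₂ ^ 2) + x₁) ^ s / √(x₁ ^ 2 + x₂ ^ 2)))) x₁ := by
  simp only [fun t => (hasDerivAt_u1_fst s hx₂ t).deriv]
  exact ((hasDerivAt_rpow_sqrt_sq_add_sq_add_left s hx₂ x₁).const_mul _).const_mul _

lemma hasDerivAt_weighted_deriv_u1_snd (s x₁ : ℝ) {x₂ : ℝ} (hx₂ : x₂ ≠ 0) :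
    HasDerivAt (fun t => t ^ (1 - 2 * s) * deriv (fun b => u1 s x₁ b) t)
      ((1 - 2 * s) * x₂ ^ (1 - 2 * s - 1) *
          (s * (s + 1) * x₂ * (√(x₁ ^ 2 + x₂ ^ 2) + x₁) ^ (s - 1))
        + x₂ ^ (1 - 2 * s) * (s * (s + 1) * (√(x₁ ^ 2 + x₂ ^ 2) + x₁) ^ (s - 1)
          + s * (s + 1) * x₂ * ((s - 1) * x₂ * (√(x₁ ^ 2 + x₂ ^ 2) + x₁) ^ (s - 1 - 1)
            / √(x₁ ^ 2 + x₂ ^ 2)))) x₂ := by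
  have hflux : (fun t => t ^ (1 - 2 * s) * deriv (fun b => u1 s x₁ b) t) =ᶠ[nhds x₂]
      fun t => t ^ (1 - 2 * s) * (s * (s + 1) * t * (√(x₁ ^ 2 + t ^ 2) + x₁) ^ (s - 1)) := by
    filter_upwards [eventually_ne_nhds hx₂] with t ht
    rw [(hasDerivAt_u1_snd s x₁ ht).deriv]
  refine (((Real.hasDerivAt_rpow_const (Or.inl hx₂)).mul
    (((hasDerivAt_id' x₂).const_mul (s * (s + 1))).mul
      (hasDerivAt_rpow_sqrt_sq_add_sq_add_right (s - 1) x₁ hx₂))).congr_of_eventuallyEq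
        hflux).congr_deriv ?_
  simp only [Pi.mul_apply]
  ring

theorem stmt9_general (s : ℝ) (x₁ x₂ : ℝ) (hx₂ : 0 < x₂) :
    deriv (fun t => x₂ ^ (1 - 2 * s) * deriv (fun a => u1 s a x₂) t) x₁
      + deriv (fun t => t ^ (1 - 2 * s) * deriv (fun b => u1 s x₁ b) t) x₂ = 0 := by
  rw [(hasDerivAt_weighted_deriv_u1_fst s x₁ hx₂.ne').deriv,
    (hasDerivAt_weighted_deriv_u1_snd s x₁ hx₂.ne').deriv]
  set r := √(x₁ ^ 2 + x₂ ^ 2)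
  have hr2 : r ^ 2 = x₁ ^ 2 + x₂ ^ 2 := Real.sq_sqrt (by positivity)
  have hr : 0 < r := Real.sqrt_pos.mpr (by positivity)
  have hw : r + x₁ ≠ 0 := (sqrt_sq_add_sq_add_pos x₁ hx₂.ne').ne'
  rw [rpow_sub_one hx₂.ne', rpow_sub_one hw, rpow_sub_one hw, rpow_sub_one hw]
  field_simp
  linear_combination s * x₂ ^ (1 - 2 * s) * (r + x₁) ^ s * (1 - s ^ 2) * hr2

/-- `u₁` satisfies `∂₁(x₂^{1-2s}∂₁u₁) + ∂₂(x₂^{1-2s}∂₂u₁) = 0` in the open upper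
half-plane. -/
theorem stmt9 (s : ℝ) (hs : s ∈ Set.Ioo (0 : ℝ) 1) (x₁ x₂ : ℝ) (hx₂ : 0 < x₂) :
    deriv (fun t => x₂ ^ (1 - 2 * s) * deriv (fun a => u1 s a x₂) t) x₁
      + deriv (fun t => t ^ (1 - 2 * s) * deriv (fun b => u1 s x₁ b) t) x₂ = 0 :=
  stmt9_general s x₁ x₂ hx₂
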